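/- Let (a,b) ∈ {(2,0), (2,2)} ⊆ (ℤ/4ℤ)², i.e., θ = a + bw ∈ {2, 2+2w}, and R = R_θ, and let n ≥ 1. Let v ∈ Rⁿ be any vector with vᵢ ∈ {2, 2+2w} for every i, and let C := R·v = {r·v : r ∈ R} be the linear code generated by v. Then C has exactly 4 elements, and d_G(Φ(x), Φ(y)) = 2n for all distinct x, y ∈ C; in particular C attains the Plotkin-like bound with equality, since with d = 2n one has |C| = 4 = ⌊2d/(2d − 3n)⌋. -/

import Mathlib

open Polynomial

/-- The base ring ℤ/4ℤ. -/
abbrev Z4 := ZMod 4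

/-- The polynomial X² − (a + bX) over ℤ/4ℤ. -/
noncomputable def wPoly (a b : Z4) : Z4[X] := X ^ 2 - (C b * X + C a)

/-- The ring R_{a+bw} = (ℤ/4ℤ)[X]/(X² − (a + bX)); every element is uniquely
x₀ + x₁·w with x₀, x₁ ∈ ℤ/4ℤ, and w² = a + b·w. -/
abbrev Rw (a b : Z4) : Type := AdjoinRoot (wPoly a b)

/-- The element w of R_{a+bw}. -/
noncomputable def ww (a b : Z4) : Rw a b := AdjoinRoot.root _

instance (a b : Z4) : Nonempty (Rw a b) := ⟨0⟩

/-- The Gau map expressed on coordinates:  ψ(x₀, x₁) is the DNA pair (in Fin 4 × Fin 4,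
with A,G,C,T encoded as 0,1,2,3) assigned to the ring element x₀ + x₁·w. -/
def psi (p : Z4 × Z4) : Fin 4 × Fin 4 :=
  match p.1.val, p.2.val with
  | 0, 0 => (3, 3)
  | 1, 0 => (0, 1)
  | 2, 0 => (2, 2)
  | 3, 0 => (1, 0)
  | 0, 1 => (0, 2)
  | 1, 1 => (0, 3)
  | 2, 1 => (1, 3)
  | 3, 1 => (1, 2)
  | 0, 2 => (1, 1)
  | 1, 2 => (2, 3)
  | 2, 2 => (0, 0)
  | 3, 2 => (3, 2)
  | 0, 3 => (2, 0)
  | 1, 3 => (2, 1)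
  | 2, 3 => (3, 1)
  | _, _ => (3, 0)

/-- `phi` is a Gau map on R_{a+bw}: on the element x₀ + x₁·w it takes the value
prescribed by the table ψ. -/
def IsGauMap (a b : Z4) (phi : Rw a b → Fin 4 × Fin 4) : Prop :=
  ∀ x₀ x₁ : Z4,
    phi (algebraMap Z4 (Rw a b) x₀ + algebraMap Z4 (Rw a b) x₁ * ww a b) = psi (x₀, x₁)

/-- Coordinatewise extension Φ of a Gau map φ to vectors. -/
def PhiV (a b : Z4) (phi : Rw a b → Fin 4 × Fin 4) (n : ℕ) (x : Fin n → Rw a b) :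
    Fin n → Fin 4 × Fin 4 :=
  fun j => phi (x j)

/-- Inverse Φ⁻¹ of the coordinatewise extension of a Gau map. -/
noncomputable def PhiVinv (a b : Z4) (phi : Rw a b → Fin 4 × Fin 4) (n : ℕ)
    (y : Fin n → Fin 4 × Fin 4) : Fin n → Rw a b :=
  fun j => Function.invFun phi (y j)

/-- DNA-string reversal y ↦ y^R on Σⁿ: read the length-2n DNA string backwards,
i.e. reverse the order of the pairs and swap the two entries of each pair. -/
def dnaRev (n : ℕ) (y : Fin n → Fin 4 × Fin 4) : Fin n → Fin 4 × Fin 4 :=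
  fun j => ((y j.rev).2, (y j.rev).1)

/-- Watson–Crick complement y ↦ y^C on Σⁿ. -/
def dnaCompl (n : ℕ) (y : Fin n → Fin 4 × Fin 4) : Fin n → Fin 4 × Fin 4 :=
  fun j => (3 - (y j).1, 3 - (y j).2)

/-- Vector reversal g ↦ g^r on Rⁿ. -/
def vecRev {α : Type*} (n : ℕ) (x : Fin n → α) : Fin n → α :=
  fun j => x j.rev

/-- The Gau distance on Σⁿ. -/
def dG (n : ℕ) (x y : Fin n → Fin 4 × Fin 4) : ℕ :=
  ∑ j, ((if (x j).1 = (y j).1 then 0 else 1) + (if (x j).2 = (y j).2 then 0 else 1))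


/-!
For θ ∈ {2, 2 + 2w} we have w² = 2 + bw with b² = 0, so w⁴ = 0 and 1 + w is a unit.
Hence v = 2u with every uᵢ a unit, and C = (2R)·u. The map z ↦ z·u is injective, so
|C| = |2R| = 4, and two distinct codewords z·u ≠ z'·u differ in every coordinate, where both
entries lie in 2R = {0, 2, 2w, 2 + 2w}. The Gau map sends these four elements to the diagonal
pairs (3,3), (2,2), (1,1), (0,0), so every coordinate contributes 2 to the distance.
-/

instance : Nontrivial Z4 := ⟨0, 1, by decide⟩

lemma psi_injective : Function.Injective psi := by decide

lemma psi_two_smul_ne : ∀ s t : Z4 × Z4, 2 • s ≠ 2 • t →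
    (psi (2 • s)).1 ≠ (psi (2 • t)).1 ∧ (psi (2 • s)).2 ≠ (psi (2 • t)).2 := by
  decide

lemma ncard_range_two_smul : (Set.range fun p : Z4 × Z4 => 2 • p).ncard = 4 := by
  rw [Set.ncard_eq_toFinset_card', Set.toFinset_range]
  rfl

lemma dG_eq_two_mul_of_forall_ne {n : ℕ} {x y : Fin n → Fin 4 × Fin 4}
    (h : ∀ j, (x j).1 ≠ (y j).1 ∧ (x j).2 ≠ (y j).2) : dG n x y = 2 * n := by
  simp [dG, h, mul_comm]

lemma setOf_eq_smul_smul_eq_image_span {R ι : Type*} [CommRing R] (c : R) (u : ι → R) :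
    {x | ∃ r : R, x = r • c • u} = (· • u) '' (Ideal.span {c} : Set R) := by
  ext x
  simp only [Set.mem_ofPred_eq, Set.mem_image, SetLike.mem_coe, Ideal.mem_span_singleton']
  constructor
  · rintro ⟨r, rfl⟩
    exact ⟨r * c, ⟨r, rfl⟩, (smul_smul r c u).symm⟩
  · rintro ⟨_, ⟨r, rfl⟩, rfl⟩
    exact ⟨r, (smul_smul r c u).symm⟩

lemma smul_left_injective_of_isUnit_apply {R ι : Type*} [CommRing R] {u : ι → R} {i : ι}
    (hu : IsUnit (u i)) : Function.Injective fun z : R => z • u :=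
  fun _ _ h => hu.mul_left_inj.mp (congrFun h i)

section wPoly

variable {a b : Z4}

lemma degree_linear_lt_two : (C b * X + C a).degree < 2 :=
  degree_linear_le.trans_lt (by exact_mod_cast one_lt_two)

lemma monic_wPoly : (wPoly a b).Monic :=
  monic_X_pow_sub degree_linear_lt_two

lemma degree_wPoly : (wPoly a b).degree = 2 := by
  rw [wPoly, degree_sub_eq_left_of_degree_lt] <;> rw [degree_X_pow]
  · rfl
  · exact degree_linear_lt_two

end wPoly

namespace Rw

variable {a b : Z4}

variable (a b) in
noncomputable def ofPair (p : Z4 × Z4) : Rw a b :=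
  algebraMap Z4 (Rw a b) p.1 + algebraMap Z4 (Rw a b) p.2 * ww a b

lemma ww_sq : ww a b ^ 2 = algebraMap Z4 (Rw a b) a + algebraMap Z4 (Rw a b) b * ww a b := by
  have h : AdjoinRoot.mk (wPoly a b) (X ^ 2 - (C b * X + C a)) = 0 := AdjoinRoot.mk_self
  simp only [map_sub, map_add, map_mul, map_pow, AdjoinRoot.mk_X, AdjoinRoot.mk_C] at h
  rw [ww, AdjoinRoot.algebraMap_eq]
  linear_combination h

lemma ofPair_surjective : Function.Surjective (ofPair a b) := by
  intro r
  obtain ⟨p, rfl⟩ := AdjoinRoot.mk_surjective r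
  rw [← AdjoinRoot.mk_leftInverse monic_wPoly (AdjoinRoot.mk _ p), AdjoinRoot.modByMonicHom_mk]
  have hdeg : (p %ₘ wPoly a b).degree ≤ 1 := by
    have h := degree_modByMonic_lt p (monic_wPoly (a := a) (b := b))
    rw [degree_wPoly] at h
    exact Order.lt_succ_iff.mp (by exact_mod_cast h)
  generalize p %ₘ wPoly a b = q at hdeg ⊢
  refine ⟨(q.coeff 0, q.coeff 1), ?_⟩
  conv_rhs => rw [eq_X_add_C_of_degree_le_one hdeg]
  simp only [ofPair, map_add, map_mul, AdjoinRoot.mk_X, AdjoinRoot.mk_C, ww,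
    AdjoinRoot.algebraMap_eq]
  ring

lemma two_mul_ofPair (p : Z4 × Z4) : 2 * ofPair a b p = ofPair a b (2 • p) := by
  simp only [ofPair, Prod.smul_fst, Prod.smul_snd, map_nsmul]
  ring

lemma span_two_eq_image :
    (Ideal.span {(2 : Rw a b)} : Set (Rw a b)) =
      ofPair a b '' Set.range fun p : Z4 × Z4 => 2 • p := by
  rw [← Set.range_comp]
  ext x
  simp only [SetLike.mem_coe, Ideal.mem_span_singleton', Set.mem_range, Function.comp_apply]
  constructor
  · rintro ⟨r, rfl⟩
    obtain ⟨p, rfl⟩ := ofPair_surjective r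
    exact ⟨p, by rw [mul_comm, two_mul_ofPair]⟩
  · rintro ⟨p, rfl⟩
    exact ⟨ofPair a b p, by rw [mul_comm, two_mul_ofPair]⟩

lemma isNilpotent_ww (hab : (a = 2 ∧ b = 0) ∨ (a = 2 ∧ b = 2)) : IsNilpotent (ww a b) := by
  refine ⟨4, ?_⟩
  have h4 : (4 : Rw a b) = 0 := by
    rw [← map_ofNat (algebraMap Z4 (Rw a b)) 4]
    exact (congrArg _ (by decide : (4 : Z4) = 0)).trans (map_zero _)
  rw [show ww a b ^ 4 = (ww a b ^ 2) ^ 2 by ring, ww_sq]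
  rcases hab with ⟨rfl, rfl⟩ | ⟨rfl, rfl⟩ <;> simp only [map_ofNat, map_zero]
  · linear_combination h4
  · linear_combination (1 + 2 * ww 2 2 + ww 2 2 ^ 2) * h4

lemma exists_isUnit_and_eq_two_smul (hab : (a = 2 ∧ b = 0) ∨ (a = 2 ∧ b = 2)) {n : ℕ}
    {v : Fin n → Rw a b} (hv : ∀ i, v i = 2 ∨ v i = 2 + 2 * ww a b) :
    ∃ u : Fin n → Rw a b, (∀ i, IsUnit (u i)) ∧ v = (2 : Rw a b) • u := by
  have h : ∀ i, ∃ c : Rw a b, IsUnit c ∧ v i = 2 * c := fun i =>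
    (hv i).elim (fun h => ⟨1, isUnit_one, by rw [h, mul_one]⟩)
      (fun h => ⟨1 + ww a b, (isNilpotent_ww hab).isUnit_one_add, by rw [h, mul_one_add]⟩)
  choose u hu hvu using h
  exact ⟨u, hu, funext hvu⟩

end Rw

namespace IsGauMap

open Rw

variable {a b : Z4} {phi : Rw a b → Fin 4 × Fin 4}

lemma apply_ofPair (hphi : IsGauMap a b phi) (p : Z4 × Z4) : phi (ofPair a b p) = psi p :=
  hphi p.1 p.2

lemma ofPair_injective (hphi : IsGauMap a b phi) : Function.Injective (ofPair a b) := by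
  refine Function.Injective.of_comp (f := phi) ?_
  rw [show phi ∘ ofPair a b = psi from funext hphi.apply_ofPair]
  exact psi_injective

lemma ncard_span_two (hphi : IsGauMap a b phi) :
    (Ideal.span {(2 : Rw a b)} : Set (Rw a b)).ncard = 4 := by
  rw [span_two_eq_image, Set.ncard_image_of_injective _ hphi.ofPair_injective,
    ncard_range_two_smul]

lemma fst_ne_and_snd_ne_of_mem_span_two (hphi : IsGauMap a b phi) {x y : Rw a b}
    (hx : x ∈ Ideal.span {2}) (hy : y ∈ Ideal.span {2}) (hxy : x ≠ y) :
    (phi x).1 ≠ (phi y).1 ∧ (phi x).2 ≠ (phi y).2 := by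
  rw [← SetLike.mem_coe, span_two_eq_image] at hx hy
  obtain ⟨_, ⟨s, rfl⟩, rfl⟩ := hx
  obtain ⟨_, ⟨t, rfl⟩, rfl⟩ := hy
  rw [hphi.apply_ofPair, hphi.apply_ofPair]
  exact psi_two_smul_ne s t fun h => hxy (congrArg (ofPair a b) h)

end IsGauMap

/-- for θ = a + bw ∈ {2, 2+2w} and v ∈ Rⁿ with every entry in {2, 2+2w},
the linear code C = R·v has exactly 4 elements, any two distinct codewords are at Gau
distance exactly 2n, and C attains the Plotkin-like bound with equality: with d = 2n,
|C| = 4 = ⌊2d/(2d − 3n)⌋. -/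
theorem plotkin_optimal_code (a b : Z4) (hab : (a = 2 ∧ b = 0) ∨ (a = 2 ∧ b = 2))
    (n : ℕ) (hn : 1 ≤ n)
    (phi : Rw a b → Fin 4 × Fin 4) (hphi : IsGauMap a b phi)
    (v : Fin n → Rw a b) (hv : ∀ i, v i = 2 ∨ v i = 2 + 2 * ww a b) :
    Set.ncard {x : Fin n → Rw a b | ∃ r : Rw a b, x = r • v} = 4 ∧
    (∀ x ∈ {x : Fin n → Rw a b | ∃ r : Rw a b, x = r • v},
      ∀ y ∈ {x : Fin n → Rw a b | ∃ r : Rw a b, x = r • v},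
        x ≠ y → dG n (PhiV a b phi n x) (PhiV a b phi n y) = 2 * n) ∧
    2 * (2 * n) / (2 * (2 * n) - 3 * n) = 4 := by
  obtain ⟨u, hu, rfl⟩ := Rw.exists_isUnit_and_eq_two_smul hab hv
  rw [setOf_eq_smul_smul_eq_image_span]
  refine ⟨?_, ?_, ?_⟩
  · rw [Set.ncard_image_of_injective _ (smul_left_injective_of_isUnit_apply (hu ⟨0, hn⟩)),
      hphi.ncard_span_two]
  · rintro _ ⟨z, hz, rfl⟩ _ ⟨z', hz', rfl⟩ hne
    have hzz' : z ≠ z' := fun h => hne (by rw [h])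
    exact dG_eq_two_mul_of_forall_ne fun j =>
      hphi.fst_ne_and_snd_ne_of_mem_span_two (Ideal.mul_mem_right _ _ hz)
        (Ideal.mul_mem_right _ _ hz') (mt (hu j).mul_left_inj.mp hzz')
  · rw [show 2 * (2 * n) - 3 * n = n by omega]
    exact Nat.div_eq_of_eq_mul_left hn (by ring)
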